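/- If a quasigroup Q is anti-isotopic to itself and anti-isotopic to Qᵢ for some i ∈ {1,2,3,4}, then Q is anti-isotopic to Qⱼ for every j ∈ {1,2,3,4,5}. -/
import Mathlib


def IsQuasigroup {Q : Type*} (m : Q → Q → Q) : Prop :=
  (∀ a, Function.Bijective (fun x => m a x)) ∧ (∀ a, Function.Bijective (fun x => m x a))

def Isotopic {Q : Type*} (m₁ m₂ : Q → Q → Q) : Prop :=
  ∃ α β γ : Q → Q, Function.Bijective α ∧ Function.Bijective β ∧ Function.Bijective γ ∧
    ∀ x y, m₂ (α x) (β y) = γ (m₁ x y)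

def AntiIsotopic {Q : Type*} (m₁ m₂ : Q → Q → Q) : Prop :=
  ∃ α β γ : Q → Q, Function.Bijective α ∧ Function.Bijective β ∧ Function.Bijective γ ∧
    ∀ x y, m₂ (α x) (β y) = γ (m₁ y x)

private lemma iso_symm {Q : Type*} {m₁ m₂ : Q → Q → Q} (h : Isotopic m₁ m₂) :
    Isotopic m₂ m₁ := by
  obtain ⟨α, β, γ, hα, hβ, hγ, H⟩ := h
  refine ⟨(Equiv.ofBijective α hα).symm, (Equiv.ofBijective β hβ).symm,
    (Equiv.ofBijective γ hγ).symm, (Equiv.ofBijective α hα).symm.bijective,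
    (Equiv.ofBijective β hβ).symm.bijective, (Equiv.ofBijective γ hγ).symm.bijective, ?_⟩
  intro x y
  have : m₂ x y = γ (m₁ ((Equiv.ofBijective α hα).symm x) ((Equiv.ofBijective β hβ).symm y)) := by
    conv_lhs => rw [← (Equiv.ofBijective α hα).apply_symm_apply x,
      ← (Equiv.ofBijective β hβ).apply_symm_apply y]
    exact H _ _
  rw [this]
  exact ((Equiv.ofBijective γ hγ).symm_apply_apply _).symm

private lemma iso_trans {Q : Type*} {m₁ m₂ m₃ : Q → Q → Q}
    (h : Isotopic m₁ m₂) (h' : Isotopic m₂ m₃) : Isotopic m₁ m₃ := by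
  obtain ⟨α, β, γ, hα, hβ, hγ, H⟩ := h
  obtain ⟨α', β', γ', hα', hβ', hγ', H'⟩ := h'
  exact ⟨α' ∘ α, β' ∘ β, γ' ∘ γ, hα'.comp hα, hβ'.comp hβ, hγ'.comp hγ,
    fun x y => by simp only [Function.comp_apply, H', H]⟩

/-- Passing to left divisions preserves isotopy. -/
private lemma iso_ldiv {Q : Type*} {m₁ m₂ n₁ n₂ : Q → Q → Q}
    (hc₁ : ∀ x y z, n₁ x y = z ↔ m₁ x z = y)
    (hc₂ : ∀ x y z, n₂ x y = z ↔ m₂ x z = y)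
    (h : Isotopic m₁ m₂) : Isotopic n₁ n₂ := by
  obtain ⟨α, β, γ, hα, hβ, hγ, H⟩ := h
  refine ⟨α, γ, β, hα, hγ, hβ, fun x y => ?_⟩
  refine (hc₂ (α x) (γ y) (β (n₁ x y))).mpr ?_
  rw [H, (hc₁ x y (n₁ x y)).mp rfl]

/-- Passing to right divisions preserves isotopy. -/
private lemma iso_rdiv {Q : Type*} {m₁ m₂ n₁ n₂ : Q → Q → Q}
    (hc₁ : ∀ x y z, n₁ x y = z ↔ m₁ z y = x)
    (hc₂ : ∀ x y z, n₂ x y = z ↔ m₂ z y = x)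
    (h : Isotopic m₁ m₂) : Isotopic n₁ n₂ := by
  obtain ⟨α, β, γ, hα, hβ, hγ, H⟩ := h
  refine ⟨γ, β, α, hγ, hβ, hα, fun x y => ?_⟩
  refine (hc₂ (γ x) (β y) (α (n₁ x y))).mpr ?_
  rw [H, (hc₁ x y (n₁ x y)).mp rfl]

/-- Passing to transposes preserves isotopy. -/
private lemma iso_transp {Q : Type*} {n₁ n₂ t₁ t₂ : Q → Q → Q}
    (ht₁ : ∀ x y, t₁ x y = n₁ y x) (ht₂ : ∀ x y, t₂ x y = n₂ y x)
    (h : Isotopic n₁ n₂) : Isotopic t₁ t₂ := by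
  obtain ⟨α, β, γ, hα, hβ, hγ, H⟩ := h
  exact ⟨β, α, γ, hβ, hα, hγ, fun x y => by rw [ht₂, H, ht₁]⟩

theorem stmt_14 {Q : Type*} (m p1 p2 p3 p4 p5 : Q → Q → Q) (hq : IsQuasigroup m)
    (h1 : ∀ x y z, p1 x y = z ↔ m x z = y)
    (h2 : ∀ x y z, p2 x y = z ↔ m z y = x)
    (h3 : ∀ x y z, p3 x y = z ↔ m z x = y)
    (h4 : ∀ x y z, p4 x y = z ↔ m y z = x)
    (h5 : ∀ x y, p5 x y = m y x)
    (hself : AntiIsotopic m m)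
    (hsome : AntiIsotopic m p1 ∨ AntiIsotopic m p2 ∨ AntiIsotopic m p3 ∨ AntiIsotopic m p4) :
    AntiIsotopic m p1 ∧ AntiIsotopic m p2 ∧ AntiIsotopic m p3 ∧ AntiIsotopic m p4 ∧
      AntiIsotopic m p5 := by
  -- characterization facts for left divisions
  have ch_p1_m : ∀ x y z, m x y = z ↔ p1 x z = y := fun x y z => (h1 x z y).symm
  have ch_p2_p4 : ∀ x y z, p4 x y = z ↔ p2 x z = y :=
    fun x y z => (h4 x y z).trans (h2 x z y).symm
  have ch_p4_p2 : ∀ x y z, p2 x y = z ↔ p4 x z = y :=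
    fun x y z => (h2 x y z).trans (h4 x z y).symm
  -- characterization facts for right divisions
  have cr_p1_p3 : ∀ x y z, p3 x y = z ↔ p1 z y = x :=
    fun x y z => (h3 x y z).trans (h1 z y x).symm
  have cr_p3_p1 : ∀ x y z, p1 x y = z ↔ p3 z y = x :=
    fun x y z => (h1 x y z).trans (h3 z y x).symm
  -- transpose facts
  have tp1 : ∀ x y, p1 x y = p4 y x :=
    fun x y => ((h4 y x (p1 x y)).mpr ((h1 x y (p1 x y)).mp rfl)).symm
  have tp2 : ∀ x y, p2 x y = p3 y x :=
    fun x y => ((h3 y x (p2 x y)).mpr ((h2 x y (p2 x y)).mp rfl)).symm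
  have tp3 : ∀ x y, p3 x y = p2 y x :=
    fun x y => ((h2 y x (p3 x y)).mpr ((h3 x y (p3 x y)).mp rfl)).symm
  have tp4 : ∀ x y, p4 x y = p1 y x :=
    fun x y => ((h1 y x (p4 x y)).mpr ((h4 x y (p4 x y)).mp rfl)).symm
  -- hself says p5 is isotopic to m
  have hT : Isotopic p5 m := by
    obtain ⟨α, β, γ, hα, hβ, hγ, H⟩ := hself
    exact ⟨α, β, γ, hα, hβ, hγ, fun x y => (H x y).trans (congrArg γ (h5 x y)).symm⟩
  have hT' : Isotopic m p5 := iso_symm hT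
  -- AntiIsotopic m pⱼ ↔ Isotopic m pⱼ  (given m ~ p5)
  have anti_of_iso : ∀ p : Q → Q → Q, Isotopic m p → AntiIsotopic m p := by
    intro p hp
    obtain ⟨α, β, γ, hα, hβ, hγ, H⟩ := iso_trans hT hp
    exact ⟨α, β, γ, hα, hβ, hγ, fun x y => (H x y).trans (congrArg γ (h5 x y))⟩
  have iso_of_anti : ∀ p : Q → Q → Q, AntiIsotopic m p → Isotopic m p := by
    intro p hp
    obtain ⟨α, β, γ, hα, hβ, hγ, H⟩ := hp
    exact iso_trans hT' ⟨α, β, γ, hα, hβ, hγ,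
      fun x y => (H x y).trans (congrArg γ (h5 x y)).symm⟩
  -- the two base cases
  have case1 : Isotopic m p1 →
      Isotopic m p1 ∧ Isotopic m p2 ∧ Isotopic m p3 ∧ Isotopic m p4 := by
    intro hp1
    have hp2p3 : Isotopic p2 p3 := iso_rdiv h2 cr_p1_p3 hp1
    have hmp4 : Isotopic m p4 := iso_trans hT' (iso_transp h5 tp4 hp1)
    have hp1p2 : Isotopic p1 p2 := iso_ldiv h1 ch_p4_p2 hmp4
    have hmp2 : Isotopic m p2 := iso_trans hp1 hp1p2
    exact ⟨hp1, hmp2, iso_trans hmp2 hp2p3, hmp4⟩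
  have case2 : Isotopic m p2 →
      Isotopic m p1 ∧ Isotopic m p2 ∧ Isotopic m p3 ∧ Isotopic m p4 := by
    intro hp2
    have hmp3 : Isotopic m p3 := iso_trans hT' (iso_transp h5 tp3 hp2)
    have hp1p4 : Isotopic p1 p4 := iso_ldiv h1 ch_p2_p4 hp2
    have hp2p1 : Isotopic p2 p1 := iso_rdiv h2 cr_p3_p1 hmp3
    have hmp1 : Isotopic m p1 := iso_trans hp2 hp2p1
    exact ⟨hmp1, hp2, hmp3, iso_trans hmp1 hp1p4⟩
  have all : Isotopic m p1 ∧ Isotopic m p2 ∧ Isotopic m p3 ∧ Isotopic m p4 := by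
    rcases hsome with h | h | h | h
    · exact case1 (iso_of_anti _ h)
    · exact case2 (iso_of_anti _ h)
    · -- m ~ p3 gives m ~ p2 by transposing
      have hp3 := iso_of_anti _ h
      exact case2 (iso_trans hT' (iso_transp h5 tp2 hp3))
    · have hp4 := iso_of_anti _ h
      exact case1 (iso_trans hT' (iso_transp h5 tp1 hp4))
  obtain ⟨a1, a2, a3, a4⟩ := all
  refine ⟨anti_of_iso _ a1, anti_of_iso _ a2, anti_of_iso _ a3, anti_of_iso _ a4, ?_⟩
  exact ⟨id, id, id, Function.bijective_id, Function.bijective_id, Function.bijective_id,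
    fun x y => h5 x y⟩
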